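/- arXiv:1805.06302 — 2 statements merged into one kernel-verified Lean document; each statement's English description precedes it below -/
import Mathlib

section
/- Let Γ be a labeled graph that is a tree with all white vertices of genus 0, and let Γ1 be obtained from Γ by performing operation O1 at a white vertex of Γ. If G(Γ) is the trivial group, then G(Γ1) is the trivial group; in particular, operation O1 does not change the associated group of a labeled graph whose associated group is trivial. -/
namespace Stratifold

/-- A **labeled graph**: a finite bipartite multigraph whose vertices (named by natural
numbers) are partitioned into black and white vertices, every edge (also named by a
natural number) joining a black vertex to a white vertex and carrying a positive integer
label, and every white vertex carrying an integer genus. -/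
structure LGraph where
  blacks : Finset ℕ
  whites : Finset ℕ
  edges : Finset ℕ
  bEnd : ℕ → ℕ
  wEnd : ℕ → ℕ
  label : ℕ → ℕ
  genus : ℕ → ℤ
  disj : Disjoint blacks whites
  bEnd_mem : ∀ e ∈ edges, bEnd e ∈ blacks
  wEnd_mem : ∀ e ∈ edges, wEnd e ∈ whites
  label_pos : ∀ e ∈ edges, 0 < label e

namespace LGraph

/-- The set of all vertices of a labeled graph. -/
def Verts (G : LGraph) : Finset ℕ := G.blacks ∪ G.whites

/-- The edges incident to a vertex. -/
def IncidentEdges (G : LGraph) (v : ℕ) : Finset ℕ :=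
  G.edges.filter fun e => G.bEnd e = v ∨ G.wEnd e = v

/-- The degree of a vertex. -/
def deg (G : LGraph) (v : ℕ) : ℕ := (G.IncidentEdges v).card

/-- Adjacency: two vertices joined by some edge. -/
def Adj (G : LGraph) (u v : ℕ) : Prop :=
  ∃ e ∈ G.edges, (G.bEnd e = u ∧ G.wEnd e = v) ∨ (G.bEnd e = v ∧ G.wEnd e = u)

/-- Reachability by a path of edges. -/
def Reach (G : LGraph) : ℕ → ℕ → Prop := Relation.ReflTransGen G.Adj

/-- The graph is connected (and nonempty). -/
def Connected (G : LGraph) : Prop :=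
  G.Verts.Nonempty ∧ ∀ u ∈ G.Verts, ∀ v ∈ G.Verts, G.Reach u v

/-- A (multi)graph is a tree iff it is connected and has exactly one more vertex
than it has edges. -/
def IsTree (G : LGraph) : Prop := G.Connected ∧ G.edges.card + 1 = G.Verts.card

/-- Trivalent: for every black vertex, the labels of its incident edges sum to `3`. -/
def Trivalent (G : LGraph) : Prop :=
  ∀ b ∈ G.blacks, ∑ e ∈ G.IncidentEdges b, G.label e = 3

/-- All white vertices have genus `0`. -/
def WhitesGenusZero (G : LGraph) : Prop := ∀ w ∈ G.whites, G.genus w = 0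

/-- All terminal (degree-one) vertices are white. -/
def TerminalsWhite (G : LGraph) : Prop := ∀ v ∈ G.blacks, G.deg v ≠ 1

/-- The relator associated to a white vertex `w`: the product
`b(e₁)^{r(e₁)} ⋯ b(eₚ)^{r(eₚ)}` over the edges `e₁ < ⋯ < eₚ` incident to `w`
(in the chosen linear order of the edge names), where `b(e)` is the black endpoint
of `e` and `r(e)` its label. -/
def relator (G : LGraph) (w : ℕ) : FreeGroup {b : ℕ // b ∈ G.blacks} :=
  (((G.edges.filter fun e => G.wEnd e = w).sort (· ≤ ·)).map fun e =>
    if h : G.bEnd e ∈ G.blacks then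
      FreeGroup.of (⟨G.bEnd e, h⟩ : {b : ℕ // b ∈ G.blacks}) ^ G.label e
    else 1).prod

/-- The set of relators of `G`: one for each white vertex. -/
def rels (G : LGraph) : Set (FreeGroup {b : ℕ // b ∈ G.blacks}) :=
  {r | ∃ w ∈ G.whites, r = G.relator w}

/-- The group associated to a labeled graph which is a tree with all white vertices of
genus 0: one generator for each black vertex, one relation for each white vertex. -/
abbrev Grp (G : LGraph) : Type := PresentedGroup G.rels

/-- The generator of `Grp G` corresponding to a black vertex `b`. -/
def gen (G : LGraph) (b : ℕ) (h : b ∈ G.blacks) : G.Grp := PresentedGroup.of ⟨b, h⟩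

/-- `G` is the labeled graph consisting of a single white vertex `w` of genus `0`. -/
def IsSingleWhite (G : LGraph) (w : ℕ) : Prop :=
  G.whites = {w} ∧ G.blacks = ∅ ∧ G.edges = ∅ ∧ G.genus w = 0

/-- `G` is a `b111`-tree: one black vertex joined by three edges of label `1` to three
white vertices of genus `0`. -/
def IsB111 (G : LGraph) : Prop :=
  ∃ b w₁ w₂ w₃ e₁ e₂ e₃ : ℕ,
    G.blacks = {b} ∧ G.whites = {w₁, w₂, w₃} ∧
    w₁ ≠ w₂ ∧ w₁ ≠ w₃ ∧ w₂ ≠ w₃ ∧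
    G.edges = {e₁, e₂, e₃} ∧ e₁ ≠ e₂ ∧ e₁ ≠ e₃ ∧ e₂ ≠ e₃ ∧
    G.bEnd e₁ = b ∧ G.bEnd e₂ = b ∧ G.bEnd e₃ = b ∧
    G.wEnd e₁ = w₁ ∧ G.wEnd e₂ = w₂ ∧ G.wEnd e₃ = w₃ ∧
    G.label e₁ = 1 ∧ G.label e₂ = 1 ∧ G.label e₃ = 1 ∧
    G.genus w₁ = 0 ∧ G.genus w₂ = 0 ∧ G.genus w₃ = 0

/-- Operation `O1` performed at the white vertex `w` of `G`, producing `G'`: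
the edges incident to `w` are split into two (possibly empty) sets `E₀` and its
complement; `w` is replaced by two white vertices `w₀`, `w₁` of genus `0` (the edges of
`E₀` reattached to `w₀`, the others to `w₁`); a new black vertex `b` and a new terminal
white vertex `w₂` of genus `0` are added, together with three new edges of label `1`
joining `b` to `w₀`, to `w₁` and to `w₂`. -/
def O1At (G G' : LGraph) (w : ℕ) : Prop :=
  w ∈ G.whites ∧
  ∃ (E₀ : Finset ℕ) (w₀ w₁ w₂ b f₀ f₁ f₂ : ℕ),
    E₀ ⊆ G.edges.filter (fun e => G.wEnd e = w) ∧
    w₀ ∉ G.Verts ∧ w₁ ∉ G.Verts ∧ w₂ ∉ G.Verts ∧ b ∉ G.Verts ∧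
    w₀ ≠ w₁ ∧ w₀ ≠ w₂ ∧ w₁ ≠ w₂ ∧ b ≠ w₀ ∧ b ≠ w₁ ∧ b ≠ w₂ ∧
    f₀ ∉ G.edges ∧ f₁ ∉ G.edges ∧ f₂ ∉ G.edges ∧ f₀ ≠ f₁ ∧ f₀ ≠ f₂ ∧ f₁ ≠ f₂ ∧
    G'.blacks = insert b G.blacks ∧
    G'.whites = insert w₀ (insert w₁ (insert w₂ (G.whites.erase w))) ∧
    G'.edges = insert f₀ (insert f₁ (insert f₂ G.edges)) ∧
    (∀ e ∈ G.edges, G'.bEnd e = G.bEnd e ∧ G'.label e = G.label e) ∧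
    (∀ e ∈ G.edges, G'.wEnd e =
      if G.wEnd e = w then (if e ∈ E₀ then w₀ else w₁) else G.wEnd e) ∧
    G'.bEnd f₀ = b ∧ G'.bEnd f₁ = b ∧ G'.bEnd f₂ = b ∧
    G'.wEnd f₀ = w₀ ∧ G'.wEnd f₁ = w₁ ∧ G'.wEnd f₂ = w₂ ∧
    G'.label f₀ = 1 ∧ G'.label f₁ = 1 ∧ G'.label f₂ = 1 ∧
    (∀ v ∈ G.whites.erase w, G'.genus v = G.genus v) ∧
    G'.genus w₀ = 0 ∧ G'.genus w₁ = 0 ∧ G'.genus w₂ = 0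

/-- Operation `O1` performed at some white vertex. -/
def O1Step (G G' : LGraph) : Prop := ∃ w, O1At G G' w

/-- Operation `O2` performed at the white vertex `w` of `G`, producing `G'`: a new black
vertex `b` and a new terminal white vertex `w'` of genus `0` are added, together with an
edge of label `2` joining `w` to `b` and an edge of label `1` joining `b` to `w'`. -/
def O2At (G G' : LGraph) (w : ℕ) : Prop :=
  w ∈ G.whites ∧
  ∃ (b w' f₁ f₂ : ℕ),
    b ∉ G.Verts ∧ w' ∉ G.Verts ∧ b ≠ w' ∧
    f₁ ∉ G.edges ∧ f₂ ∉ G.edges ∧ f₁ ≠ f₂ ∧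
    G'.blacks = insert b G.blacks ∧
    G'.whites = insert w' G.whites ∧
    G'.edges = insert f₁ (insert f₂ G.edges) ∧
    (∀ e ∈ G.edges, G'.bEnd e = G.bEnd e ∧ G'.wEnd e = G.wEnd e ∧ G'.label e = G.label e) ∧
    G'.bEnd f₁ = b ∧ G'.wEnd f₁ = w ∧ G'.label f₁ = 2 ∧
    G'.bEnd f₂ = b ∧ G'.wEnd f₂ = w' ∧ G'.label f₂ = 1 ∧
    (∀ v ∈ G.whites, G'.genus v = G.genus v) ∧
    G'.genus w' = 0

/-- Operation `O2` performed at some white vertex. -/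
def O2Step (G G' : LGraph) : Prop := ∃ w, O2At G G' w

/-- Two labeled graphs are disjoint: no common vertices and no common edges. -/
def DisjGraphs (G₁ G₂ : LGraph) : Prop :=
  Disjoint G₁.Verts G₂.Verts ∧ Disjoint G₁.edges G₂.edges

/-- Operation `O1*` on disjoint labeled graphs `G₁`, `G₂` with chosen white vertices
`w₁ ∈ G₁`, `w₂ ∈ G₂`, producing `G'`: a new black vertex `b` and a new terminal white
vertex `w` of genus `0` are added, together with three new edges of label `1` joining
`b` to `w₁`, to `w₂` and to `w`. -/
def O1StarAt (G₁ G₂ G' : LGraph) (w₁ w₂ : ℕ) : Prop :=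
  DisjGraphs G₁ G₂ ∧ w₁ ∈ G₁.whites ∧ w₂ ∈ G₂.whites ∧
  ∃ (b w f₀ f₁ f₂ : ℕ),
    b ∉ G₁.Verts ∪ G₂.Verts ∧ w ∉ G₁.Verts ∪ G₂.Verts ∧ b ≠ w ∧
    f₀ ∉ G₁.edges ∪ G₂.edges ∧ f₁ ∉ G₁.edges ∪ G₂.edges ∧ f₂ ∉ G₁.edges ∪ G₂.edges ∧
    f₀ ≠ f₁ ∧ f₀ ≠ f₂ ∧ f₁ ≠ f₂ ∧
    G'.blacks = insert b (G₁.blacks ∪ G₂.blacks) ∧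
    G'.whites = insert w (G₁.whites ∪ G₂.whites) ∧
    G'.edges = insert f₀ (insert f₁ (insert f₂ (G₁.edges ∪ G₂.edges))) ∧
    (∀ e ∈ G₁.edges, G'.bEnd e = G₁.bEnd e ∧ G'.wEnd e = G₁.wEnd e ∧ G'.label e = G₁.label e) ∧
    (∀ e ∈ G₂.edges, G'.bEnd e = G₂.bEnd e ∧ G'.wEnd e = G₂.wEnd e ∧ G'.label e = G₂.label e) ∧
    G'.bEnd f₀ = b ∧ G'.wEnd f₀ = w₁ ∧ G'.label f₀ = 1 ∧
    G'.bEnd f₁ = b ∧ G'.wEnd f₁ = w₂ ∧ G'.label f₁ = 1 ∧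
    G'.bEnd f₂ = b ∧ G'.wEnd f₂ = w ∧ G'.label f₂ = 1 ∧
    (∀ v ∈ G₁.whites, G'.genus v = G₁.genus v) ∧
    (∀ v ∈ G₂.whites, G'.genus v = G₂.genus v) ∧
    G'.genus w = 0

end LGraph

open LGraph

/-- `𝒢`: the smallest class of labeled graphs containing the graph consisting of a single
white vertex of genus `0` and closed under operations `O1`, `O2` (at any white vertex of
a member) and `O1*` (joining any two disjoint members at any white vertices). -/
inductive InG : LGraph → Prop
  | single (G : LGraph) (w : ℕ) : IsSingleWhite G w → InG G
  | o1 (G G' : LGraph) (w : ℕ) : InG G → O1At G G' w → InG G'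
  | o2 (G G' : LGraph) (w : ℕ) : InG G → O2At G G' w → InG G'
  | o1star (G₁ G₂ G' : LGraph) (w₁ w₂ : ℕ) :
      InG G₁ → InG G₂ → O1StarAt G₁ G₂ G' w₁ w₂ → InG G'

namespace LGraph

/-- The induced labeled subgraph on a set `S` of vertices. -/
def induce (G : LGraph) (S : Finset ℕ) : LGraph where
  blacks := G.blacks ∩ S
  whites := G.whites ∩ S
  edges := G.edges.filter fun e => G.bEnd e ∈ S ∧ G.wEnd e ∈ S
  bEnd := G.bEnd
  wEnd := G.wEnd
  label := G.label
  genus := G.genus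
  disj := G.disj.mono Finset.inter_subset_left Finset.inter_subset_left
  bEnd_mem := fun e he => by
    rw [Finset.mem_filter] at he
    exact Finset.mem_inter.2 ⟨G.bEnd_mem e he.1, he.2.1⟩
  wEnd_mem := fun e he => by
    rw [Finset.mem_filter] at he
    exact Finset.mem_inter.2 ⟨G.wEnd_mem e he.1, he.2.2⟩
  label_pos := fun e he => G.label_pos e (Finset.mem_filter.1 he).1

/-- `B`: the set of black vertices of degree `3`. -/
def bigB (G : LGraph) : Finset ℕ := G.blacks.filter fun b => G.deg b = 3

/-- `Γ − st(B)`: the graph obtained by removing the black vertices of degree `3`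
together with all edges incident to them. -/
def minusStB (G : LGraph) : LGraph := G.induce (G.Verts \ G.bigB)

/-- `St(B)`: the closed star of the set `B` of black vertices of degree `3`, i.e. the
vertices of `B`, the edges incident to them, and the white endpoints of those edges. -/
def closedStar (G : LGraph) : LGraph where
  blacks := G.bigB
  whites := G.whites.filter fun w => ∃ e ∈ G.edges, G.bEnd e ∈ G.bigB ∧ G.wEnd e = w
  edges := G.edges.filter fun e => G.bEnd e ∈ G.bigB
  bEnd := G.bEnd
  wEnd := G.wEnd
  label := G.label
  genus := G.genus
  disj := G.disj.mono (Finset.filter_subset _ _) (Finset.filter_subset _ _)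
  bEnd_mem := fun e he => (Finset.mem_filter.1 he).2
  wEnd_mem := fun e he => by
    rw [Finset.mem_filter] at he
    exact Finset.mem_filter.2
      ⟨G.wEnd_mem e he.1, ⟨e, he.1, he.2, rfl⟩⟩
  label_pos := fun e he => G.label_pos e (Finset.mem_filter.1 he).1

open Classical in
/-- The connected component of a vertex `v` in `G`, as a labeled graph. -/
noncomputable def component (G : LGraph) (v : ℕ) : LGraph :=
  G.induce (G.Verts.filter fun u => G.Reach u v)

/-- `C` is a `(2,1)`-collapsible tree with root `r`: it is obtained from the labeled
graph consisting of the single white vertex `r` of genus `0` by repeatedly attaching,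
at a white vertex `u`, a new black vertex `b` joined to `u` by an edge of label `2` and
to a new terminal white vertex by an edge of label `1` (i.e. by repeatedly performing
operation `O2`).  This is exactly the barycentric subdivision of a tree rooted at `r`,
with barycenters colored black, an edge labeled `2` precisely when its distance to the
root is even, and `1` when it is odd. -/
def IsCollapsible (C : LGraph) (r : ℕ) : Prop :=
  ∃ C₀ : LGraph, IsSingleWhite C₀ r ∧ Relation.ReflTransGen O2Step C₀ C

open Classical in
/-- The white vertices of `St(B)` that are not the root of the `(2,1)`-collapsible
component of `Γ − st(B)` containing them. -/
noncomputable def notRootWhites (G : LGraph) : Finset ℕ :=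
  G.closedStar.whites.filter fun w => ¬ IsCollapsible ((G.minusStB).component w) w

/-- `R` is the reduced graph `R(G)`: it is obtained from the closed star `St(B)` by
attaching to each white vertex `w` of `St(B)` that is not a root a `b12`-tree, i.e. a
new black vertex joined to `w` by an edge of label `1` and to a new terminal white
vertex of genus `0` by an edge of label `2`. -/
def IsReduced (G R : LGraph) : Prop :=
  ∃ nb nw ne₁ ne₂ : ℕ → ℕ,
    (∀ w ∈ G.notRootWhites,
      nb w ∉ G.Verts ∧ nw w ∉ G.Verts ∧ nb w ≠ nw w ∧
      ne₁ w ∉ G.edges ∧ ne₂ w ∉ G.edges ∧ ne₁ w ≠ ne₂ w) ∧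
    (∀ w ∈ G.notRootWhites, ∀ w' ∈ G.notRootWhites, w ≠ w' →
      nb w ≠ nb w' ∧ nb w ≠ nw w' ∧ nw w ≠ nw w' ∧
      ne₁ w ≠ ne₁ w' ∧ ne₁ w ≠ ne₂ w' ∧ ne₂ w ≠ ne₂ w') ∧
    R.blacks = G.closedStar.blacks ∪ G.notRootWhites.image nb ∧
    R.whites = G.closedStar.whites ∪ G.notRootWhites.image nw ∧
    R.edges = G.closedStar.edges ∪ G.notRootWhites.image ne₁ ∪ G.notRootWhites.image ne₂ ∧
    (∀ e ∈ G.closedStar.edges, R.bEnd e = G.bEnd e ∧ R.wEnd e = G.wEnd e ∧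
      R.label e = G.label e) ∧
    (∀ w ∈ G.closedStar.whites, R.genus w = G.genus w) ∧
    (∀ w ∈ G.notRootWhites,
      R.bEnd (ne₁ w) = nb w ∧ R.wEnd (ne₁ w) = w ∧ R.label (ne₁ w) = 1 ∧
      R.bEnd (ne₂ w) = nb w ∧ R.wEnd (ne₂ w) = nw w ∧ R.label (ne₂ w) = 2 ∧
      R.genus (nw w) = 0)

/-- `H` is a horned tree: the bicolored labeled tree obtained from a tree `T` with at
least two edges, all of whose nonterminal vertices have degree `3`, by coloring
degree-1 vertices white (genus `0`) and degree-3 vertices black, trisecting terminal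
edges and bisecting nonterminal edges (coloring the new vertices black exactly when
they neighbor a terminal vertex), and labeling terminal edges `2` and all other edges
`1`.  Equivalently (intrinsically): `H` is a tree with all whites of genus `0`; at
least one black vertex has degree `3`; every terminal vertex is white and its edge has
label `2`; every nonterminal white vertex has degree `2` with both incident labels `1`;
and every black vertex either has degree `3` with all incident labels `1`, or has
degree `2` with one incident edge of label `2` leading to a terminal white vertex and
the other of label `1`. -/
def IsHornedTree (H : LGraph) : Prop :=
  H.IsTree ∧ H.WhitesGenusZero ∧
  (∃ b ∈ H.blacks, H.deg b = 3) ∧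
  H.TerminalsWhite ∧
  (∀ w ∈ H.whites, H.deg w = 1 → ∀ e ∈ H.IncidentEdges w, H.label e = 2) ∧
  (∀ w ∈ H.whites, H.deg w ≠ 1 → H.deg w = 2 ∧ ∀ e ∈ H.IncidentEdges w, H.label e = 1) ∧
  (∀ b ∈ H.blacks,
    (H.deg b = 3 ∧ ∀ e ∈ H.IncidentEdges b, H.label e = 1) ∨
    (H.deg b = 2 ∧ ∃ e₁ ∈ H.IncidentEdges b, ∃ e₂ ∈ H.IncidentEdges b, e₁ ≠ e₂ ∧
      H.label e₁ = 2 ∧ H.label e₂ = 1 ∧ H.deg (H.wEnd e₁) = 1))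

/-- `H` is a (labeled bipartite) subgraph of `G`. -/
def IsSubgraph (H G : LGraph) : Prop :=
  H.blacks ⊆ G.blacks ∧ H.whites ⊆ G.whites ∧ H.edges ⊆ G.edges ∧
  (∀ e ∈ H.edges, H.bEnd e = G.bEnd e ∧ H.wEnd e = G.wEnd e ∧ H.label e = G.label e) ∧
  ∀ w ∈ H.whites, H.genus w = G.genus w

end LGraph

end Stratifold

/-!
Under `O1` the terminal vertex `w₂` imposes `b = 1`, so the relations of `G(Γ₁)` at `w₀` and `w₁`
become the products `R₀`, `R₁` of the terms `b(e)^r(e)` over `E₀` and over the other edges at `w`,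
while the remaining relations are those of `Γ`. Since `Γ` is a tree, deleting `w` separates the
black ends of the edges in `E₀` from those of the other edges at `w`; let `S` be the set of
vertices reached from the former. Sending the generators in `S` to their namesakes in `G(Γ₁)` and
the others to `1` turns the relation of `Γ` at `w` into `R₀` and every other relation of `Γ` into
a relation of `Γ₁` or into `1`, so it defines a homomorphism `G(Γ) → G(Γ₁)`; likewise with `S`
and its complement swapped. As `G(Γ)` is trivial, both homomorphisms are trivial, and together
they kill every generator of `G(Γ₁)`.
-/

theorem List.prod_map_filter_eq_prod_map {α M : Type*} [Monoid M] {g : α → M}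
    {p : α → Prop} [DecidablePred p] :
    ∀ {l : List α}, (∀ a ∈ l, ¬ p a → g a = 1) → ((l.filter p).map g).prod = (l.map g).prod
  | [], _ => rfl
  | a :: l, h => by
    have ih := List.prod_map_filter_eq_prod_map fun b hb => h b (List.mem_cons_of_mem a hb)
    by_cases ha : p a
    · simp [ha, ih]
    · simp [ha, h a List.mem_cons_self ha, ih]

namespace Stratifold

section SortedProd

variable {α M : Type*} [LinearOrder α] [Monoid M]

def sortedProd (s : Finset α) (g : α → M) : M := ((s.sort (· ≤ ·)).map g).prod

theorem sortedProd_congr {s : Finset α} {g g' : α → M} (h : ∀ a ∈ s, g a = g' a) :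
    sortedProd s g = sortedProd s g' :=
  congrArg List.prod (List.map_congr_left fun a ha => h a ((Finset.mem_sort _).1 ha))

theorem sortedProd_eq_one {s : Finset α} {g : α → M} (h : ∀ a ∈ s, g a = 1) :
    sortedProd s g = 1 :=
  List.prod_eq_one fun _ hx => by
    obtain ⟨a, ha, rfl⟩ := List.mem_map.1 hx
    exact h a ((Finset.mem_sort _).1 ha)

theorem sortedProd_singleton (a : α) (g : α → M) : sortedProd {a} g = g a := by
  simp [sortedProd]

theorem sortedProd_of_subset {s t : Finset α} {g : α → M} (hts : t ⊆ s)
    (h : ∀ a ∈ s, a ∉ t → g a = 1) : sortedProd s g = sortedProd t g := by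
  have hsort : (s.sort (· ≤ ·)).filter (· ∈ t) = t.sort (· ≤ ·) :=
    (s.sortedLT_sort.pairwise.filter _).eq_of_mem_iff t.sortedLT_sort.pairwise fun a => by
      simpa using fun hat => hts hat
  rw [sortedProd, sortedProd, ← hsort,
    List.prod_map_filter_eq_prod_map fun a ha hat =>
      h a ((Finset.mem_sort _).1 ha) (by simpa using hat)]

end SortedProd

namespace LGraph

variable {G : LGraph}

theorem adj_comm {u v : ℕ} : G.Adj u v ↔ G.Adj v u := by
  simp only [Adj, or_comm]

instance : Std.Symm G.Adj := ⟨fun _ _ => adj_comm.1⟩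

theorem Adj.mem_verts {u v : ℕ} (h : G.Adj u v) : u ∈ G.Verts ∧ v ∈ G.Verts := by
  obtain ⟨e, he, ⟨rfl, rfl⟩ | ⟨rfl, rfl⟩⟩ := h
  · exact ⟨Finset.mem_union_left _ (G.bEnd_mem e he), Finset.mem_union_right _ (G.wEnd_mem e he)⟩
  · exact ⟨Finset.mem_union_right _ (G.wEnd_mem e he), Finset.mem_union_left _ (G.bEnd_mem e he)⟩

theorem Adj.ne {u v : ℕ} (h : G.Adj u v) : u ≠ v := by
  obtain ⟨e, he, ⟨rfl, rfl⟩ | ⟨rfl, rfl⟩⟩ := h <;> intro h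
  · exact Finset.disjoint_left.1 G.disj (G.bEnd_mem e he) (h ▸ G.wEnd_mem e he)
  · exact Finset.disjoint_left.1 G.disj (G.bEnd_mem e he) (h ▸ G.wEnd_mem e he)

def toSimpleGraph (G : LGraph) : SimpleGraph G.Verts where
  Adj u v := G.Adj u v
  symm := ⟨fun _ _ => adj_comm.1⟩
  loopless := ⟨fun _ h => h.ne rfl⟩

theorem Reach.reachable {u v : ℕ} (h : G.Reach u v) (hu : u ∈ G.Verts) (hv : v ∈ G.Verts) :
    G.toSimpleGraph.Reachable ⟨u, hu⟩ ⟨v, hv⟩ := by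
  induction h with
  | refl => rfl
  | tail _ hadj ih =>
    exact (ih hadj.mem_verts.1).trans (SimpleGraph.Adj.reachable hadj)

theorem card_edgeSet_toSimpleGraph_le (G : LGraph) :
    Nat.card G.toSimpleGraph.edgeSet ≤ G.edges.card := by
  let toEdge : G.edges → G.toSimpleGraph.edgeSet := fun e =>
    have hadj : G.Adj (G.bEnd e) (G.wEnd e) := ⟨e, e.2, Or.inl ⟨rfl, rfl⟩⟩
    ⟨s(⟨_, hadj.mem_verts.1⟩, ⟨_, hadj.mem_verts.2⟩), hadj⟩
  have hsurj : Function.Surjective toEdge := by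
    rintro ⟨x, hx⟩
    induction x using Sym2.ind with
    | h u v =>
      obtain ⟨e, he, ⟨hu, hv⟩ | ⟨hv, hu⟩⟩ := (SimpleGraph.mem_edgeSet _).1 hx
      · exact ⟨⟨e, he⟩, Subtype.ext (by simp [toEdge, hu, hv])⟩
      · exact ⟨⟨e, he⟩, Subtype.ext (by simp [toEdge, hu, hv, Sym2.eq_swap])⟩
  simpa using Nat.card_le_card_of_surjective toEdge hsurj

theorem Connected.card_verts_le (hG : G.Connected) : G.Verts.card ≤ G.edges.card + 1 := by
  have : Nonempty G.Verts := hG.1.to_subtype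
  have hconn : G.toSimpleGraph.Connected :=
    ⟨fun u v => (hG.2 u u.2 v v.2).reachable u.2 v.2⟩
  calc G.Verts.card = Nat.card G.Verts := (Nat.card_eq_finsetCard _).symm
    _ ≤ Nat.card G.toSimpleGraph.edgeSet + 1 := hconn.card_vert_le_card_edgeSet_add_one
    _ ≤ G.edges.card + 1 := by grw [G.card_edgeSet_toSimpleGraph_le]

def eraseEdge (G : LGraph) (e : ℕ) : LGraph :=
  { G with
    edges := G.edges.erase e
    bEnd_mem := fun _ he => G.bEnd_mem _ (Finset.mem_of_mem_erase he)
    wEnd_mem := fun _ he => G.wEnd_mem _ (Finset.mem_of_mem_erase he)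
    label_pos := fun _ he => G.label_pos _ (Finset.mem_of_mem_erase he) }

theorem IsTree.not_reach_eraseEdge (hG : G.IsTree) {e : ℕ} (he : e ∈ G.edges) :
    ¬ (G.eraseEdge e).Reach (G.bEnd e) (G.wEnd e) := by
  intro hcycle
  have hconn : (G.eraseEdge e).Connected := by
    refine ⟨hG.1.1, fun u hu v hv => Relation.reflTransGen_closed ?_ u v (hG.1.2 u hu v hv)⟩
    rintro x y ⟨e', he', hxy⟩
    by_cases he'e : e' = e
    · subst he'e
      obtain ⟨rfl, rfl⟩ | ⟨rfl, rfl⟩ := hxy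
      · exact hcycle
      · exact symm hcycle
    · exact .single ⟨e', Finset.mem_erase.2 ⟨he'e, he'⟩, hxy⟩
  have hcard := hconn.card_verts_le
  have := hG.2
  simp only [eraseEdge, Verts, Finset.card_erase_of_mem he] at hcard this
  have := Finset.card_pos.2 ⟨e, he⟩
  omega

theorem wEnd_mem_verts {e : ℕ} (he : e ∈ G.edges) : G.wEnd e ∈ G.Verts :=
  Finset.mem_union_right _ (G.wEnd_mem e he)

def ReachAvoiding (G : LGraph) (w : ℕ) : ℕ → ℕ → Prop :=
  Relation.ReflTransGen fun u v => G.Adj u v ∧ u ≠ w ∧ v ≠ w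

def whiteEdges (G : LGraph) (v : ℕ) : Finset ℕ := G.edges.filter fun e => G.wEnd e = v

theorem whiteEdges_subset {v : ℕ} : G.whiteEdges v ⊆ G.edges := Finset.filter_subset _ _

theorem bEnd_ne_of_mem_whites {e w : ℕ} (he : e ∈ G.edges) (hw : w ∈ G.whites) :
    G.bEnd e ≠ w := fun h => Finset.disjoint_left.1 G.disj (G.bEnd_mem e he) (h ▸ hw)

theorem IsTree.not_reachAvoiding (hG : G.IsTree) {w e₀ e₁ : ℕ} (he₀ : e₀ ∈ G.whiteEdges w)
    (he₁ : e₁ ∈ G.whiteEdges w) (hne : e₀ ≠ e₁) :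
    ¬ G.ReachAvoiding w (G.bEnd e₁) (G.bEnd e₀) := by
  simp only [whiteEdges, Finset.mem_filter] at he₀ he₁
  intro hpath
  apply hG.not_reach_eraseEdge he₁.1
  have hpath' : (G.eraseEdge e₁).Reach (G.bEnd e₁) (G.bEnd e₀) := by
    refine Relation.ReflTransGen.mono ?_ _ _ hpath
    rintro u v ⟨⟨e, he, huv⟩, hu, hv⟩
    refine ⟨e, Finset.mem_erase.2 ⟨?_, he⟩, huv⟩
    rintro rfl
    obtain ⟨-, h⟩ | ⟨-, h⟩ := huv
    exacts [hv (h ▸ he₁.2), hu (h ▸ he₁.2)]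
  rw [he₁.2]
  exact hpath'.tail ⟨e₀, Finset.mem_erase.2 ⟨hne, he₀.1⟩, Or.inl ⟨rfl, he₀.2⟩⟩

def side (G : LGraph) (w : ℕ) (E₀ : Finset ℕ) : Set ℕ :=
  {u | ∃ e ∈ E₀, G.ReachAvoiding w u (G.bEnd e)}

theorem bEnd_mem_side {w e : ℕ} {E₀ : Finset ℕ} (he : e ∈ E₀) : G.bEnd e ∈ G.side w E₀ :=
  ⟨e, he, .refl⟩

theorem IsTree.bEnd_notMem_side (hG : G.IsTree) {w e : ℕ} {E₀ : Finset ℕ}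
    (hE₀ : E₀ ⊆ G.whiteEdges w) (he : e ∈ G.whiteEdges w) (heE₀ : e ∉ E₀) :
    G.bEnd e ∉ G.side w E₀ := by
  rintro ⟨e₀, he₀, hpath⟩
  exact hG.not_reachAvoiding (hE₀ he₀) he (ne_of_mem_of_not_mem he₀ heE₀) hpath

theorem bEnd_mem_side_iff {w v e e' : ℕ} {E₀ : Finset ℕ} (hw : w ∈ G.whites) (hvw : v ≠ w)
    (he : e ∈ G.whiteEdges v) (he' : e' ∈ G.whiteEdges v) :
    G.bEnd e ∈ G.side w E₀ ↔ G.bEnd e' ∈ G.side w E₀ := by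
  simp only [whiteEdges, Finset.mem_filter] at he he'
  have hstep : ∀ {a b}, a ∈ G.edges ∧ G.wEnd a = v → b ∈ G.edges ∧ G.wEnd b = v →
      G.bEnd a ∈ G.side w E₀ → G.bEnd b ∈ G.side w E₀ := by
    rintro a b ⟨ha, hav⟩ ⟨hb, hbv⟩ ⟨e₀, he₀, hpath⟩
    refine ⟨e₀, he₀, .head ⟨⟨b, hb, Or.inl ⟨rfl, hbv⟩⟩, bEnd_ne_of_mem_whites hb hw, hvw⟩ ?_⟩
    exact .head ⟨⟨a, ha, Or.inr ⟨rfl, hav⟩⟩, hvw, bEnd_ne_of_mem_whites ha hw⟩ hpath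
  exact ⟨hstep he he', hstep he' he⟩

variable {H : Type*} [Group H]

def relWord (G : LGraph) (c : ℕ → H) (v : ℕ) : H :=
  sortedProd (G.whiteEdges v) fun e => c (G.bEnd e) ^ G.label e

def genFun (G : LGraph) (β : ℕ) : G.Grp := if h : β ∈ G.blacks then G.gen β h else 1

theorem lift_relator (c : ℕ → H) (v : ℕ) :
    FreeGroup.lift (fun x : G.blacks => c x) (G.relator v) = G.relWord c v := by
  rw [relator, map_list_prod, List.map_map]
  refine congrArg List.prod (List.map_congr_left fun e he => ?_)
  have hmem : e ∈ G.edges := (Finset.mem_filter.1 ((Finset.mem_sort _).1 he)).1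
  simp [G.bEnd_mem e hmem]

theorem relWord_genFun {v : ℕ} (hv : v ∈ G.whites) : G.relWord G.genFun v = 1 := by
  have hlift : FreeGroup.lift (fun x : G.blacks => G.genFun x) = PresentedGroup.mk G.rels :=
    FreeGroup.ext_hom _ _ fun x => by simp [genFun, gen, PresentedGroup.of]
  rw [← lift_relator, hlift]
  exact PresentedGroup.one_of_mem ⟨v, hv, rfl⟩

theorem eq_one_of_forall_relWord_eq_one (hG : ∀ x : G.Grp, x = 1) {c : ℕ → H}
    (hc : ∀ v ∈ G.whites, G.relWord c v = 1) {β : ℕ} (hβ : β ∈ G.blacks) : c β = 1 := by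
  have hrels : ∀ r ∈ G.rels, FreeGroup.lift (fun x : G.blacks => c x) r = 1 := by
    rintro _ ⟨v, hv, rfl⟩
    rw [lift_relator]
    exact hc v hv
  calc c β = PresentedGroup.toGroup hrels (PresentedGroup.of ⟨β, hβ⟩) :=
        (PresentedGroup.toGroup.of hrels (x := ⟨β, hβ⟩)).symm
    _ = 1 := by rw [hG (PresentedGroup.of _), map_one]

theorem eq_one_of_forall_genFun_eq_one (h : ∀ β ∈ G.blacks, G.genFun β = 1) (x : G.Grp) :
    x = 1 := by
  have : MonoidHom.id G.Grp = 1 :=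
    PresentedGroup.ext fun β => by simpa [genFun, gen, β.2] using h β β.2
  exact DFunLike.congr_fun this x

theorem relWord_mulIndicator_eq_one_of_iff {S : Set ℕ} {c : ℕ → H} {v : ℕ}
    (hS : ∀ e ∈ G.whiteEdges v, ∀ e' ∈ G.whiteEdges v, G.bEnd e ∈ S ↔ G.bEnd e' ∈ S)
    (hc : G.relWord c v = 1) : G.relWord (S.mulIndicator c) v = 1 := by
  by_cases hmem : ∃ e ∈ G.whiteEdges v, G.bEnd e ∈ S
  · obtain ⟨e, he, heS⟩ := hmem
    rw [← hc]
    exact sortedProd_congr fun e' he' => by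
      rw [Set.mulIndicator_of_mem ((hS e he e' he').1 heS)]
  · push Not at hmem
    exact sortedProd_eq_one fun e he => by rw [Set.mulIndicator_of_notMem (hmem e he), one_pow]

theorem relWord_mulIndicator_of_subset {S : Set ℕ} {c : ℕ → H} {w : ℕ} {E₀ : Finset ℕ}
    (hE₀ : E₀ ⊆ G.whiteEdges w) (hin : ∀ e ∈ E₀, G.bEnd e ∈ S)
    (hout : ∀ e ∈ G.whiteEdges w, e ∉ E₀ → G.bEnd e ∉ S) :
    G.relWord (S.mulIndicator c) w = sortedProd E₀ fun e => c (G.bEnd e) ^ G.label e := by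
  rw [relWord, sortedProd_of_subset hE₀ fun e he heE₀ => by
    rw [Set.mulIndicator_of_notMem (hout e he heE₀), one_pow]]
  exact sortedProd_congr fun e he => by rw [Set.mulIndicator_of_mem (hin e he)]

structure O1Data (G G' : LGraph) (w : ℕ) where
  E₀ : Finset ℕ
  (w₀ w₁ w₂ b f₀ f₁ f₂ : ℕ)
  mem_whites : w ∈ G.whites
  E₀_subset : E₀ ⊆ G.whiteEdges w
  w₀_notMem : w₀ ∉ G.Verts
  w₁_notMem : w₁ ∉ G.Verts
  w₂_notMem : w₂ ∉ G.Verts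
  w₀_ne_w₁ : w₀ ≠ w₁
  w₀_ne_w₂ : w₀ ≠ w₂
  w₁_ne_w₂ : w₁ ≠ w₂
  blacks_eq : G'.blacks = insert b G.blacks
  whites_eq : G'.whites = insert w₀ (insert w₁ (insert w₂ (G.whites.erase w)))
  edges_eq : G'.edges = insert f₀ (insert f₁ (insert f₂ G.edges))
  bEnd_eq : ∀ e ∈ G.edges, G'.bEnd e = G.bEnd e
  label_eq : ∀ e ∈ G.edges, G'.label e = G.label e
  wEnd_eq : ∀ e ∈ G.edges,
    G'.wEnd e = if G.wEnd e = w then (if e ∈ E₀ then w₀ else w₁) else G.wEnd e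
  bEnd_f₀ : G'.bEnd f₀ = b
  bEnd_f₁ : G'.bEnd f₁ = b
  bEnd_f₂ : G'.bEnd f₂ = b
  wEnd_f₀ : G'.wEnd f₀ = w₀
  wEnd_f₁ : G'.wEnd f₁ = w₁
  wEnd_f₂ : G'.wEnd f₂ = w₂
  label_f₀ : G'.label f₀ = 1
  label_f₁ : G'.label f₁ = 1
  label_f₂ : G'.label f₂ = 1

theorem O1At.nonempty_o1Data {G G' : LGraph} {w : ℕ} (h : O1At G G' w) :
    Nonempty (O1Data G G' w) := by
  obtain ⟨hw, E₀, w₀, w₁, w₂, b, f₀, f₁, f₂, hE₀, hw₀, hw₁, hw₂, -, h01, h02, h12, -, -, -,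
    -, -, -, -, -, -, hB, hW, hE, hold, hwold, hb₀, hb₁, hb₂, hw₀', hw₁', hw₂', hl₀, hl₁, hl₂,
    -⟩ := h
  exact ⟨⟨E₀, w₀, w₁, w₂, b, f₀, f₁, f₂, hw, hE₀, hw₀, hw₁, hw₂, h01, h02, h12, hB, hW, hE,
    fun e he => (hold e he).1, fun e he => (hold e he).2, hwold, hb₀, hb₁, hb₂, hw₀', hw₁', hw₂',
    hl₀, hl₁, hl₂⟩⟩

namespace O1Data

variable {G G' : LGraph} {w : ℕ} (d : O1Data G G' w)

theorem whiteEdges_w₂ : G'.whiteEdges d.w₂ = {d.f₂} := by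
  ext e
  simp only [whiteEdges, Finset.mem_filter, d.edges_eq, Finset.mem_insert, Finset.mem_singleton]
  grind [d.wEnd_eq, wEnd_mem_verts, d.w₂_notMem, d.wEnd_f₀, d.wEnd_f₁, d.wEnd_f₂, d.w₀_ne_w₂,
    d.w₁_ne_w₂]

theorem whiteEdges_w₀ : G'.whiteEdges d.w₀ = insert d.f₀ d.E₀ := by
  ext e
  have hE₀ := @d.E₀_subset e
  simp only [whiteEdges, Finset.mem_filter, d.edges_eq, Finset.mem_insert] at hE₀ ⊢
  grind [d.wEnd_eq, wEnd_mem_verts, d.w₀_notMem, d.wEnd_f₀, d.wEnd_f₁, d.wEnd_f₂, d.w₀_ne_w₁,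
    d.w₀_ne_w₂]

theorem whiteEdges_w₁ : G'.whiteEdges d.w₁ = insert d.f₁ (G.whiteEdges w \ d.E₀) := by
  ext e
  have hE₀ := @d.E₀_subset e
  simp only [whiteEdges, Finset.mem_filter, d.edges_eq, Finset.mem_insert, Finset.mem_sdiff]
    at hE₀ ⊢
  grind [d.wEnd_eq, wEnd_mem_verts, d.w₁_notMem, d.wEnd_f₀, d.wEnd_f₁, d.wEnd_f₂, d.w₀_ne_w₁,
    d.w₁_ne_w₂]

theorem whiteEdges_of_ne (d : O1Data G G' w) {v : ℕ} (hv : v ∈ G.whites) (hvw : v ≠ w) :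
    G'.whiteEdges v = G.whiteEdges v := by
  ext e
  have hv : v ∈ G.Verts := Finset.mem_union_right _ hv
  simp only [whiteEdges, Finset.mem_filter, d.edges_eq, Finset.mem_insert]
  grind [d.wEnd_eq, wEnd_mem_verts, d.w₀_notMem, d.w₁_notMem, d.w₂_notMem, d.wEnd_f₀, d.wEnd_f₁,
    d.wEnd_f₂]

theorem sortedProd_old_edges (d : O1Data G G' w) {s : Finset ℕ} (hs : s ⊆ G.edges) :
    sortedProd s (fun e => G'.genFun (G'.bEnd e) ^ G'.label e) =
      sortedProd s (fun e => G'.genFun (G.bEnd e) ^ G.label e) :=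
  sortedProd_congr fun e he => by rw [d.bEnd_eq e (hs he), d.label_eq e (hs he)]

theorem genFun_b : G'.genFun d.b = 1 := by
  have h := relWord_genFun (G := G') (v := d.w₂) (by simp [d.whites_eq])
  rwa [relWord, d.whiteEdges_w₂, sortedProd_singleton, d.bEnd_f₂, d.label_f₂, pow_one] at h

/-- The relation at a new white vertex `v`, with its edge to `b` dropped since `b = 1`. -/
theorem sortedProd_eq_one_of_whiteEdges_eq {v f : ℕ} {s : Finset ℕ} (hv : v ∈ G'.whites)
    (hvf : G'.whiteEdges v = insert f s) (hf : G'.bEnd f = d.b) (hs : s ⊆ G.edges) :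
    sortedProd s (fun e => G'.genFun (G.bEnd e) ^ G.label e) = 1 := by
  have h := relWord_genFun hv
  rwa [relWord, hvf, sortedProd_of_subset (Finset.subset_insert _ _) fun e he hes => by
    rw [Finset.eq_of_mem_insert_of_notMem he hes, hf, d.genFun_b, one_pow],
    d.sortedProd_old_edges hs] at h

theorem relWord_of_ne (d : O1Data G G' w) {v : ℕ} (hv : v ∈ G.whites) (hvw : v ≠ w) :
    G.relWord G'.genFun v = 1 := by
  rw [relWord, ← d.sortedProd_old_edges whiteEdges_subset, ← d.whiteEdges_of_ne hv hvw]
  exact relWord_genFun (by simp [d.whites_eq, hv, hvw])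

/-- Killing the generators outside `T` maps each relator of `G` to a relator of `G'` or to
`1`. -/
theorem relWord_mulIndicator_eq_one (d : O1Data G G' w) {T : Set ℕ} {E : Finset ℕ}
    (hE : E ⊆ G.whiteEdges w) (hin : ∀ e ∈ E, G.bEnd e ∈ T)
    (hout : ∀ e ∈ G.whiteEdges w, e ∉ E → G.bEnd e ∉ T)
    (hT : ∀ v ∈ G.whites, v ≠ w →
      ∀ e ∈ G.whiteEdges v, ∀ e' ∈ G.whiteEdges v, G.bEnd e ∈ T ↔ G.bEnd e' ∈ T)
    (hprod : sortedProd E (fun e => G'.genFun (G.bEnd e) ^ G.label e) = 1)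
    {v : ℕ} (hv : v ∈ G.whites) : G.relWord (T.mulIndicator G'.genFun) v = 1 := by
  by_cases hvw : v = w
  · rwa [hvw, relWord_mulIndicator_of_subset hE hin hout]
  · exact relWord_mulIndicator_eq_one_of_iff (hT v hv hvw) (d.relWord_of_ne hv hvw)

theorem genFun_eq_one (d : O1Data G G' w) (hG : G.IsTree) (hTriv : ∀ x : G.Grp, x = 1) {β : ℕ}
    (hβ : β ∈ G.blacks) : G'.genFun β = 1 := by
  set S := G.side w d.E₀
  have hout : ∀ e ∈ G.whiteEdges w, e ∉ d.E₀ → G.bEnd e ∉ S :=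
    fun e he => hG.bEnd_notMem_side d.E₀_subset he
  have hS : ∀ v ∈ G.whites, v ≠ w →
      ∀ e ∈ G.whiteEdges v, ∀ e' ∈ G.whiteEdges v, G.bEnd e ∈ S ↔ G.bEnd e' ∈ S :=
    fun v _ hvw e he e' he' => bEnd_mem_side_iff d.mem_whites hvw he he'
  by_cases hβS : β ∈ S
  · have h := eq_one_of_forall_relWord_eq_one hTriv
      (fun v hv => d.relWord_mulIndicator_eq_one d.E₀_subset (fun e => bEnd_mem_side) hout hS
        (d.sortedProd_eq_one_of_whiteEdges_eq (by simp [d.whites_eq]) d.whiteEdges_w₀ d.bEnd_f₀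
          (d.E₀_subset.trans whiteEdges_subset)) hv) hβ
    rwa [Set.mulIndicator_of_mem hβS] at h
  · have h := eq_one_of_forall_relWord_eq_one hTriv
      (fun v hv => d.relWord_mulIndicator_eq_one (T := Sᶜ) Finset.sdiff_subset
        (fun e he => hout e (Finset.mem_sdiff.1 he).1 (Finset.mem_sdiff.1 he).2)
        (fun e he he' => not_not.2 (bEnd_mem_side (by simpa [he] using he')))
        (fun v hv hvw e he e' he' => not_congr (hS v hv hvw e he e' he'))
        (d.sortedProd_eq_one_of_whiteEdges_eq (by simp [d.whites_eq]) d.whiteEdges_w₁ d.bEnd_f₁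
          (Finset.sdiff_subset.trans whiteEdges_subset)) hv) hβ
    rwa [Set.mulIndicator_of_mem (Set.mem_compl hβS)] at h

end O1Data

end LGraph

end Stratifold

open Stratifold Stratifold.LGraph

theorem O1_preserves_trivial_general (Γ Γ₁ : LGraph) (w : ℕ)
    (hTree : Γ.IsTree)
    (hO1 : O1At Γ Γ₁ w)
    (hTriv : ∀ x : Γ.Grp, x = 1) :
    ∀ x : Γ₁.Grp, x = 1 := by
  obtain ⟨d⟩ := hO1.nonempty_o1Data
  refine eq_one_of_forall_genFun_eq_one fun β hβ => ?_
  rcases Finset.mem_insert.1 (d.blacks_eq ▸ hβ) with rfl | hβ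
  · exact d.genFun_b
  · exact d.genFun_eq_one hTree hTriv hβ

/-- If `Γ` is a labeled graph which is a tree with all white vertices of genus `0`, and
`Γ₁` is obtained from `Γ` by operation `O1` at a white vertex of `Γ`, then triviality of
`G(Γ)` implies triviality of `G(Γ₁)`: operation `O1` does not change the associated
group of a labeled graph whose associated group is trivial. -/
theorem O1_preserves_trivial (Γ Γ₁ : LGraph) (w : ℕ)
    (hTree : Γ.IsTree) (hGenus : Γ.WhitesGenusZero)
    (hO1 : O1At Γ Γ₁ w)
    (hTriv : ∀ x : Γ.Grp, x = 1) :
    ∀ x : Γ₁.Grp, x = 1 :=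
  O1_preserves_trivial_general Γ Γ₁ w hTree hO1 hTriv
end

section
/- Every labeled graph belonging to the class 𝒢 has trivial associated group G(Γ). -/
/-!
Rather than the group `G(Γ)` itself, consider any map `f` from the black vertices to a monoid
under which the relation of every white vertex holds, the edges at that vertex being taken in
*some* order. Each of `O1`, `O2`, `O1*` adds a black vertex `b` joined by an edge of label `1`
to a new terminal white vertex, whose relation reads `f b = 1`. The edges at `b` then
contribute nothing, so the relations of the graphs the operation started from hold as well:
for `O1`, the relation of the split vertex `w` is the concatenation of those of `w₀` and `w₁`,
which is why the order of the edges has to be left free. By induction along `𝒢`, `f` is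
trivial; applied to the generators of `G(Γ)`, this kills the group.
-/

theorem List.prod_map_filter_eq_prod_map_s11 {α M : Type*} [Monoid M] {τ τ' : α → M}
    (p : α → Prop) [DecidablePred p] {L : List α}
    (hp : ∀ a ∈ L, p a → τ a = τ' a) (hnp : ∀ a ∈ L, ¬ p a → τ' a = 1) :
    ((L.filter p).map τ).prod = (L.map τ').prod := by
  induction L with
  | nil => rfl
  | cons a L ih =>
    have ih := ih (fun b hb => hp b (.tail a hb)) (fun b hb => hnp b (.tail a hb))
    by_cases ha : p a
    · simp [ha, hp a (.head L) ha, ih]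
    · simp [ha, hnp a (.head L) ha, ih]

theorem PresentedGroup.eq_one_of_forall_of_eq_one {α : Type*} {rels : Set (FreeGroup α)}
    (h : ∀ a : α, (PresentedGroup.of a : PresentedGroup rels) = 1) (x : PresentedGroup rels) :
    x = 1 :=
  DFunLike.congr_fun (PresentedGroup.ext (φ := MonoidHom.id _) (ψ := 1) h) x

namespace Stratifold

section SomeOrder

variable {α M : Type*} [Monoid M]

def ProdEqOneInSomeOrder (τ : α → M) (s : Finset α) : Prop :=
  ∃ L : List α, (L : Multiset α) = s.val ∧ (L.map τ).prod = 1

theorem ProdEqOneInSomeOrder.filter {τ τ' : α → M} {s : Finset α} (p : α → Prop)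
    [DecidablePred p] (h : ProdEqOneInSomeOrder τ' s) (hp : ∀ a ∈ s, p a → τ a = τ' a)
    (hnp : ∀ a ∈ s, ¬ p a → τ' a = 1) : ProdEqOneInSomeOrder τ (s.filter p) := by
  obtain ⟨L, hL, hprod⟩ := h
  have hmem : ∀ {a}, a ∈ L → a ∈ s := fun ha => by
    rw [← Finset.mem_val, ← hL]; exact ha
  refine ⟨L.filter p, by rw [Finset.filter_val, ← hL, Multiset.filter_coe], ?_⟩
  rw [List.prod_map_filter_eq_prod_map_s11 p (fun a ha => hp a (hmem ha))
    (fun a ha => hnp a (hmem ha)), hprod]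

theorem ProdEqOneInSomeOrder.disjUnion {τ : α → M} {s t : Finset α}
    (hs : ProdEqOneInSomeOrder τ s) (ht : ProdEqOneInSomeOrder τ t) (hst : Disjoint s t) :
    ProdEqOneInSomeOrder τ (s.disjUnion t hst) := by
  obtain ⟨L, hL, hLprod⟩ := hs
  obtain ⟨K, hK, hKprod⟩ := ht
  exact ⟨L ++ K, by rw [← Multiset.coe_add, hL, hK]; rfl, by simp [hLprod, hKprod]⟩

theorem ProdEqOneInSomeOrder.eq_one_of_singleton {τ : α → M} {a : α}
    (h : ProdEqOneInSomeOrder τ {a}) : τ a = 1 := by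
  obtain ⟨L, hL, hprod⟩ := h
  rw [Multiset.coe_eq_singleton.1 hL] at hprod
  simpa using hprod

end SomeOrder

namespace LGraph

variable {M : Type*} [Monoid M]

def edgesAt (G : LGraph) (w : ℕ) : Finset ℕ := G.edges.filter fun e => G.wEnd e = w

def term (G : LGraph) (f : ℕ → M) (e : ℕ) : M := f (G.bEnd e) ^ G.label e

def SolvesUpToOrder (G : LGraph) (f : ℕ → M) : Prop :=
  ∀ w ∈ G.whites, ProdEqOneInSomeOrder (G.term f) (G.edgesAt w)

theorem term_eq_one {G : LGraph} {f : ℕ → M} {e b : ℕ} (he : G.bEnd e = b) (hb : f b = 1) :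
    G.term f e = 1 := by
  rw [term, he, hb, one_pow]

theorem SolvesUpToOrder.eq_one_of_terminal {G : LGraph} {f : ℕ → M} (hf : G.SolvesUpToOrder f)
    {w e : ℕ} (hw : w ∈ G.whites) (he : e ∈ G.edges) (hwe : G.wEnd e = w)
    (honly : ∀ e' ∈ G.edges, G.wEnd e' = w → e' = e) (hl : G.label e = 1) :
    f (G.bEnd e) = 1 := by
  have hedgesAt : G.edgesAt w = {e} := by
    ext e'
    simp only [edgesAt, Finset.mem_filter, Finset.mem_singleton]
    exact ⟨fun h => honly e' h.1 h.2, fun h => h ▸ ⟨he, hwe⟩⟩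
  have := (hedgesAt ▸ hf w hw).eq_one_of_singleton
  rwa [term, hl, pow_one] at this

theorem edgesAt_eq_filter {G G' : LGraph} {v : ℕ} (hsub : G.edges ⊆ G'.edges)
    (hv : ∀ e ∈ G.edges, G'.wEnd e = v ↔ G.wEnd e = v) :
    G.edgesAt v = (G'.edgesAt v).filter (· ∈ G.edges) := by
  ext e
  simp only [edgesAt, Finset.mem_filter]
  constructor
  · rintro ⟨he, hwe⟩
    exact ⟨⟨hsub he, (hv e he).2 hwe⟩, he⟩
  · rintro ⟨⟨-, hwe⟩, he⟩
    exact ⟨he, (hv e he).1 hwe⟩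

theorem SolvesUpToOrder.restrict {G G' : LGraph} {f : ℕ → M} (hf : G'.SolvesUpToOrder f)
    {v : ℕ} (hv : v ∈ G'.whites) (hsub : G.edges ⊆ G'.edges)
    (hwEnd : ∀ e ∈ G.edges, G'.wEnd e = v ↔ G.wEnd e = v)
    (hterm : ∀ e ∈ G.edges, G.term f e = G'.term f e)
    (hnew : ∀ e ∈ G'.edgesAt v, e ∉ G.edges → G'.term f e = 1) :
    ProdEqOneInSomeOrder (G.term f) (G.edgesAt v) := by
  rw [edgesAt_eq_filter hsub hwEnd]
  exact (hf v hv).filter _ (fun e _ he => hterm e he) hnew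

theorem SolvesUpToOrder.merge {G G' : LGraph} {f : ℕ → M} (hf : G'.SolvesUpToOrder f)
    {w w₀ w₁ : ℕ} (hw₀ : w₀ ∈ G'.whites) (hw₁ : w₁ ∈ G'.whites) (hw₀₁ : w₀ ≠ w₁)
    (hsub : G.edges ⊆ G'.edges)
    (hwEnd : ∀ e ∈ G.edges, G'.wEnd e = w₀ ∨ G'.wEnd e = w₁ ↔ G.wEnd e = w)
    (hterm : ∀ e ∈ G.edges, G.term f e = G'.term f e)
    (hnew : ∀ e ∈ G'.edges, e ∉ G.edges → G'.term f e = 1) :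
    ProdEqOneInSomeOrder (G.term f) (G.edgesAt w) := by
  have hdisj : Disjoint (G'.edgesAt w₀) (G'.edgesAt w₁) :=
    Finset.disjoint_filter.2 fun _ _ h₀ h₁ => hw₀₁ (h₀.symm.trans h₁)
  have hsplit : G.edgesAt w =
      ((G'.edgesAt w₀).disjUnion (G'.edgesAt w₁) hdisj).filter (· ∈ G.edges) := by
    ext e
    simp only [edgesAt, Finset.mem_filter, Finset.mem_disjUnion]
    constructor
    · rintro ⟨he, hwe⟩
      exact ⟨((hwEnd e he).2 hwe).imp (⟨hsub he, ·⟩) (⟨hsub he, ·⟩), he⟩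
    · rintro ⟨h, he⟩
      exact ⟨he, (hwEnd e he).1 (h.imp And.right And.right)⟩
  rw [hsplit]
  refine ((hf w₀ hw₀).disjUnion (hf w₁ hw₁) hdisj).filter _ (fun e _ he => hterm e he)
    fun e he heG => hnew e ?_ heG
  rcases Finset.mem_disjUnion.1 he with he | he <;> exact (Finset.mem_filter.1 he).1

theorem SolvesUpToOrder.of_extension {G G' : LGraph} {f : ℕ → M} (hf : G'.SolvesUpToOrder f)
    (hwhites : G.whites ⊆ G'.whites)
    (hold : ∀ e ∈ G.edges, e ∈ G'.edges ∧ G'.bEnd e = G.bEnd e ∧ G'.wEnd e = G.wEnd e ∧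
      G'.label e = G.label e)
    (hnew : ∀ v ∈ G.whites, ∀ e ∈ G'.edgesAt v, e ∉ G.edges → G'.term f e = 1) :
    G.SolvesUpToOrder f := fun v hv =>
  hf.restrict (hwhites hv) (fun e he => (hold e he).1) (fun e he => by rw [(hold e he).2.2.1])
    (fun e he => by rw [term, term, (hold e he).2.1, (hold e he).2.2.2]) (hnew v hv)

theorem O2At.eq_one_of_notMem_blacks {G G' : LGraph} {w : ℕ} (h : O2At G G' w) {f : ℕ → M}
    (hf : G'.SolvesUpToOrder f) : ∀ b ∈ G'.blacks, b ∉ G.blacks → f b = 1 := by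
  obtain ⟨hw, b, w', f₁, f₂, -, hw'V, -, -, -, -, hB, hW, hE,
    hold, -, hwf₁, -, hbf₂, hwf₂, hlf₂, -, -⟩ := h
  have hb : f b = 1 := by
    refine hbf₂ ▸ hf.eq_one_of_terminal (hW ▸ Finset.mem_insert_self _ _)
      (by simp [hE]) hwf₂ (fun e he hwe => ?_) hlf₂
    rcases (by simpa [hE] using he : e = f₁ ∨ e = f₂ ∨ e ∈ G.edges) with rfl | rfl | he
    · exact absurd (hwe ▸ hwf₁ ▸ Finset.mem_union_right _ hw) hw'V
    · rfl
    · exact absurd (hwe ▸ (hold e he).2.1 ▸ Finset.mem_union_right _ (G.wEnd_mem e he)) hw'V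
  intro b' hb' hb'G
  rw [hB, Finset.mem_insert] at hb'
  exact hb'.resolve_right hb'G ▸ hb

theorem O2At.solvesUpToOrder {G G' : LGraph} {w : ℕ} (h : O2At G G' w) {f : ℕ → M}
    (hf : G'.SolvesUpToOrder f) : G.SolvesUpToOrder f := by
  have hnewb := h.eq_one_of_notMem_blacks hf
  obtain ⟨-, b, w', f₁, f₂, hbV, -, -, -, -, -, hB, hW, hE,
    hold, hbf₁, -, -, hbf₂, -, -, -, -⟩ := h
  have hb : f b = 1 :=
    hnewb b (hB ▸ Finset.mem_insert_self _ _) fun hb => hbV (Finset.mem_union_left _ hb)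
  have hedge : ∀ {e}, e ∈ G'.edges ↔ e = f₁ ∨ e = f₂ ∨ e ∈ G.edges := by simp [hE]
  refine hf.of_extension (hW ▸ Finset.subset_insert _ _)
    (fun e he => ⟨hedge.2 (Or.inr (Or.inr he)), hold e he⟩) fun v _ e he heG => ?_
  rcases hedge.1 (Finset.mem_filter.1 he).1 with rfl | rfl | he
  · exact term_eq_one hbf₁ hb
  · exact term_eq_one hbf₂ hb
  · exact absurd he heG

theorem O1At.eq_one_of_notMem_blacks {G G' : LGraph} {w : ℕ} (h : O1At G G' w) {f : ℕ → M}
    (hf : G'.SolvesUpToOrder f) : ∀ b ∈ G'.blacks, b ∉ G.blacks → f b = 1 := by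
  obtain ⟨-, E₀, w₀, w₁, w₂, b, f₀, f₁, f₂, -, -, -, hw₂V, -, -, hw₀w₂, hw₁w₂,
    -, -, -, -, -, -, -, -, -, hB, hW, hE, -, holdW, -, -, hbf₂, hwf₀, hwf₁, hwf₂,
    -, -, hlf₂, -, -, -, -⟩ := h
  have hb : f b = 1 := by
    refine hbf₂ ▸ hf.eq_one_of_terminal (hW ▸ by simp) (by simp [hE]) hwf₂
      (fun e he hwe => ?_) hlf₂
    rcases (by simpa [hE] using he : e = f₀ ∨ e = f₁ ∨ e = f₂ ∨ e ∈ G.edges)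
      with rfl | rfl | rfl | he
    · exact absurd (hwf₀.symm.trans hwe) hw₀w₂
    · exact absurd (hwf₁.symm.trans hwe) hw₁w₂
    · rfl
    · have := Finset.mem_union_right G.blacks (G.wEnd_mem e he)
      rw [holdW e he] at hwe
      split_ifs at hwe <;> grind [Verts]
  intro b' hb' hb'G
  rw [hB, Finset.mem_insert] at hb'
  exact hb'.resolve_right hb'G ▸ hb

theorem O1At.solvesUpToOrder {G G' : LGraph} {w : ℕ} (h : O1At G G' w) {f : ℕ → M}
    (hf : G'.SolvesUpToOrder f) : G.SolvesUpToOrder f := by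
  have hnewb := h.eq_one_of_notMem_blacks hf
  obtain ⟨-, E₀, w₀, w₁, w₂, b, f₀, f₁, f₂, -, hw₀V, hw₁V, -, hbV, hw₀w₁, -, -,
    -, -, -, -, -, -, -, -, -, hB, hW, hE, holdB, holdW, hbf₀, hbf₁, hbf₂, -, -, -,
    -, -, -, -, -, -, -⟩ := h
  have hb : f b = 1 :=
    hnewb b (hB ▸ Finset.mem_insert_self _ _) fun hb => hbV (Finset.mem_union_left _ hb)
  have hedge : ∀ {e}, e ∈ G'.edges ↔ e = f₀ ∨ e = f₁ ∨ e = f₂ ∨ e ∈ G.edges := by simp [hE]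
  have hnew : ∀ e ∈ G'.edges, e ∉ G.edges → G'.term f e = 1 := by
    intro e he heG
    rcases hedge.1 he with rfl | rfl | rfl | he
    · exact term_eq_one hbf₀ hb
    · exact term_eq_one hbf₁ hb
    · exact term_eq_one hbf₂ hb
    · exact absurd he heG
  have hsub : G.edges ⊆ G'.edges := fun e he => hedge.2 (by simp [he])
  have hterm : ∀ e ∈ G.edges, G.term f e = G'.term f e := fun e he => by
    rw [term, term, (holdB e he).1, (holdB e he).2]
  intro v hv
  have hvV : v ∈ G.Verts := Finset.mem_union_right _ hv
  by_cases hvw : v = w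
  · refine hvw ▸ hf.merge (hW ▸ by simp) (hW ▸ by simp) hw₀w₁ hsub (fun e he => ?_) hterm hnew
    have := Finset.mem_union_right G.blacks (G.wEnd_mem e he)
    rw [holdW e he]
    split_ifs <;> grind [Verts]
  · refine hf.restrict (hW ▸ by simp [hv, hvw]) hsub (fun e he => ?_) hterm
      fun e he => hnew e (Finset.mem_filter.1 he).1
    rw [holdW e he]
    split_ifs <;> grind [Verts]

theorem O1StarAt.eq_one_of_notMem_blacks {G₁ G₂ G' : LGraph} {w₁ w₂ : ℕ}
    (h : O1StarAt G₁ G₂ G' w₁ w₂) {f : ℕ → M} (hf : G'.SolvesUpToOrder f) :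
    ∀ b ∈ G'.blacks, b ∉ G₁.blacks → b ∉ G₂.blacks → f b = 1 := by
  obtain ⟨-, hw₁, hw₂, b, w, f₀, f₁, f₂, -, hwV, -, -, -, -, -, -, -, hB, hW, hE,
    hold₁, hold₂, -, hwf₀, -, -, hwf₁, -, hbf₂, hwf₂, hlf₂, -, -, -⟩ := h
  have hb : f b = 1 := by
    refine hbf₂ ▸ hf.eq_one_of_terminal (hW ▸ Finset.mem_insert_self _ _) (by simp [hE])
      hwf₂ (fun e he hwe => ?_) hlf₂
    rcases (by simpa [hE] using he :
      e = f₀ ∨ e = f₁ ∨ e = f₂ ∨ e ∈ G₁.edges ∨ e ∈ G₂.edges) with rfl | rfl | rfl | he | he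
    · exact absurd (Finset.mem_union_left _ (hwe ▸ hwf₀ ▸ Finset.mem_union_right _ hw₁)) hwV
    · exact absurd (Finset.mem_union_right _ (hwe ▸ hwf₁ ▸ Finset.mem_union_right _ hw₂)) hwV
    · rfl
    · exact absurd (Finset.mem_union_left _
        (hwe ▸ (hold₁ e he).2.1 ▸ Finset.mem_union_right _ (G₁.wEnd_mem e he))) hwV
    · exact absurd (Finset.mem_union_right _
        (hwe ▸ (hold₂ e he).2.1 ▸ Finset.mem_union_right _ (G₂.wEnd_mem e he))) hwV
  intro b' hb' hb'₁ hb'₂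
  rw [hB, Finset.mem_insert, Finset.mem_union] at hb'
  exact hb'.resolve_right (by tauto) ▸ hb

theorem O1StarAt.solvesUpToOrder {G₁ G₂ G' : LGraph} {w₁ w₂ : ℕ} (h : O1StarAt G₁ G₂ G' w₁ w₂)
    {f : ℕ → M} (hf : G'.SolvesUpToOrder f) : G₁.SolvesUpToOrder f ∧ G₂.SolvesUpToOrder f := by
  have hnewb := h.eq_one_of_notMem_blacks hf
  obtain ⟨⟨hdV, -⟩, -, -, b, w, f₀, f₁, f₂, hbV, -, -, -, -, -, -, -, -, hB, hW, hE,
    hold₁, hold₂, hbf₀, -, -, hbf₁, -, -, hbf₂, -, -, -, -, -⟩ := h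
  have hb : f b = 1 := hnewb b (hB ▸ Finset.mem_insert_self _ _)
    (fun hb => hbV (by simp [Verts, hb])) (fun hb => hbV (by simp [Verts, hb]))
  have hdW : ∀ {v}, v ∈ G₁.whites → v ∉ G₂.whites := fun h₁ h₂ =>
    Finset.disjoint_left.1 hdV (Finset.mem_union_right _ h₁) (Finset.mem_union_right _ h₂)
  have hedge : ∀ {e}, e ∈ G'.edges ↔ e = f₀ ∨ e = f₁ ∨ e = f₂ ∨ e ∈ G₁.edges ∨ e ∈ G₂.edges :=
    by simp [hE]
  have hnew : ∀ e ∈ G'.edges, e ∉ G₁.edges → e ∉ G₂.edges → G'.term f e = 1 := by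
    intro e he he₁ he₂
    rcases hedge.1 he with rfl | rfl | rfl | he | he
    · exact term_eq_one hbf₀ hb
    · exact term_eq_one hbf₁ hb
    · exact term_eq_one hbf₂ hb
    · exact absurd he he₁
    · exact absurd he he₂
  refine ⟨hf.of_extension (fun v hv => hW ▸ by simp [hv])
    (fun e he => ⟨hedge.2 (by simp [he]), hold₁ e he⟩) ?_,
    hf.of_extension (fun v hv => hW ▸ by simp [hv])
    (fun e he => ⟨hedge.2 (by simp [he]), hold₂ e he⟩) ?_⟩
  · intro v hv e he he₁
    obtain ⟨heE, hwe⟩ := Finset.mem_filter.1 he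
    refine hnew e heE he₁ fun he₂ => hdW hv ?_
    rw [← hwe, (hold₂ e he₂).2.1]; exact G₂.wEnd_mem e he₂
  · intro v hv e he he₂
    obtain ⟨heE, hwe⟩ := Finset.mem_filter.1 he
    refine hnew e heE (fun he₁ => hdW ?_ hv) he₂
    rw [← hwe, (hold₁ e he₁).2.1]; exact G₁.wEnd_mem e he₁

theorem solvesUpToOrder_gen (G : LGraph) :
    G.SolvesUpToOrder fun b => if hb : b ∈ G.blacks then G.gen b hb else 1 := by
  intro w hw
  refine ⟨(G.edgesAt w).sort (· ≤ ·), Finset.sort_eq _ _, ?_⟩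
  have hrel : (QuotientGroup.mk (G.relator w) : G.Grp) = 1 :=
    (QuotientGroup.eq_one_iff _).2 (Subgroup.subset_normalClosure ⟨w, hw, rfl⟩)
  rw [relator, ← QuotientGroup.mk'_apply, map_list_prod, List.map_map] at hrel
  refine Eq.trans ?_ hrel
  congr 1
  refine List.map_congr_left fun e he => ?_
  have hb := G.bEnd_mem e (Finset.mem_filter.1 ((Finset.mem_sort _).1 he)).1
  simp only [term, Function.comp_apply, dif_pos hb, gen, QuotientGroup.mk'_apply,
    QuotientGroup.mk_pow]
  rfl

end LGraph

theorem InG.eq_one_of_solvesUpToOrder {M : Type*} [Monoid M] {G : LGraph} (hG : InG G)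
    {f : ℕ → M} (hf : G.SolvesUpToOrder f) : ∀ b ∈ G.blacks, f b = 1 := by
  induction hG with
  | single G w hG =>
    intro b hb
    simp [hG.2.1] at hb
  | o1 G G' w _ hop ih =>
    exact fun b hb => if hbG : b ∈ G.blacks then ih (hop.solvesUpToOrder hf) b hbG
      else hop.eq_one_of_notMem_blacks hf b hb hbG
  | o2 G G' w _ hop ih =>
    exact fun b hb => if hbG : b ∈ G.blacks then ih (hop.solvesUpToOrder hf) b hbG
      else hop.eq_one_of_notMem_blacks hf b hb hbG
  | o1star G₁ G₂ G' w₁ w₂ _ _ hop ih₁ ih₂ =>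
    intro b hb
    by_cases hb₁ : b ∈ G₁.blacks
    · exact ih₁ (hop.solvesUpToOrder hf).1 b hb₁
    by_cases hb₂ : b ∈ G₂.blacks
    · exact ih₂ (hop.solvesUpToOrder hf).2 b hb₂
    exact hop.eq_one_of_notMem_blacks hf b hb hb₁ hb₂

end Stratifold

open Stratifold Stratifold.LGraph

/-- Every labeled graph belonging to the class `𝒢` has trivial associated group. -/
theorem mem_G_trivial_group (Γ : LGraph) (h : InG Γ) :
    ∀ x : Γ.Grp, x = 1 := by
  refine PresentedGroup.eq_one_of_forall_of_eq_one fun ⟨b, hb⟩ => ?_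
  have := h.eq_one_of_solvesUpToOrder Γ.solvesUpToOrder_gen b hb
  rwa [dif_pos hb] at this
end
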